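/- arXiv:1503.04529 — 2 statements merged into one kernel-verified Lean document; each statement's English description precedes it below -/
import Mathlib

section
/- Let d be a metric on a set X and let Σ ⊆ X be a subset equipped with a measure A such that there exist constants c, R > 0 with A(B(z,ρ) ∩ Σ) ≤ c ρ^{n-1} for all z ∈ X and 0 < ρ ≤ R (an (n−1)-dimensional upper regularity condition), and suppose Σ has finite A-measure and diameter at most R. Then for all α, β ∈ (0, n−1) with α + β > n − 1, there is a constant C₁ such that for all x, y ∈ X with x ≠ y, ∫_Σ d(x,z)^{−α} d(z,y)^{−β} dA(z) ≤ C₁ d(x,y)^{n−1−(α+β)}. -/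
/-!
Write `m = n - 1`. Finite mass extends the bound `A (B(z, ρ) ∩ S) ≤ c ρ^m` from `ρ ≤ R` to all
radii, at the cost of a larger constant. Cutting a ball around `x`, or its complement, into
dyadic annuli on which `d(x, ·)^(-γ)` is essentially constant, the growth bound and a geometric
series give `∫_{B(x,ρ)} d(x, ·)^(-γ) ≲ ρ^(m-γ)` for `γ < m` and the same bound for the integral
over `B(x,ρ)ᶜ` when `γ > m`. With `r = d(x, y)`, the factor `d(·, y)^(-β)` is at most
`(r/2)^(-β)` on `B(x, r/2)`, symmetrically on `B(y, r/2)`, and outside both balls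
`d(·, y) ≥ d(x, ·) / 3`; each of the three pieces is then `≲ r^(m-α-β)`.
-/

open MeasureTheory Metric

lemma tsum_ofReal_mul_mul_pow_rpow {K a q p : ℝ} (hK : 0 ≤ K) (ha : 0 < a) (hq : 0 < q)
    (hqp : q ^ p < 1) :
    ∑' j : ℕ, ENNReal.ofReal (K * (a * q ^ j) ^ p)
      = ENNReal.ofReal (K * (1 - q ^ p)⁻¹ * a ^ p) := by
  have hterm : ∀ j : ℕ, K * (a * q ^ j) ^ p = K * a ^ p * (q ^ p) ^ j := fun j => by
    rw [Real.mul_rpow ha.le (by positivity), ← Real.rpow_pow_comm hq.le]; ring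
  have hgeom := (summable_geometric_of_lt_one (by positivity) hqp).mul_left (K * a ^ p)
  simp_rw [hterm]
  rw [← ENNReal.ofReal_tsum_of_nonneg (fun j => by positivity) hgeom, tsum_mul_left,
    tsum_geometric_of_lt_one (by positivity) hqp]
  ring_nf

section Annuli

variable {X : Type*} [MetricSpace X] {x z : X} {ρ : ℝ}

lemma exists_pow_le_dist_lt_of_mem_ball (hz : z ∈ ball x ρ) (hzx : z ≠ x) :
    ∃ j : ℕ, ρ / 2 * 2⁻¹ ^ j ≤ dist x z ∧ dist x z < 2 * (ρ / 2 * 2⁻¹ ^ j) := by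
  have hd : 0 < dist x z := dist_pos.2 hzx.symm
  have hdρ : dist x z < ρ := by rwa [dist_comm, ← mem_ball]
  obtain ⟨k, hk₁, hk₂⟩ := exists_mem_Ioc_zpow (div_pos (hd.trans hdρ) hd) one_lt_two
  have hk : 0 ≤ k := by
    by_contra! hk
    have : (2 : ℝ) ^ (k + 1) ≤ 1 := zpow_le_one_of_nonpos₀ one_le_two (by omega)
    linarith [(one_lt_div hd).2 hdρ]
  lift k to ℕ using hk
  refine ⟨k, ?_, ?_⟩
  · have : ρ ≤ 2 ^ (k + 1) * dist x z := (div_le_iff₀ hd).1 (by exact_mod_cast hk₂)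
    rw [inv_pow, pow_succ] at *
    field_simp
    linarith
  · have : 2 ^ k * dist x z < ρ := (lt_div_iff₀ hd).1 (by exact_mod_cast hk₁)
    rw [inv_pow]
    field_simp
    linarith

lemma exists_pow_le_dist_lt_of_notMem_ball (hρ : 0 < ρ) (hz : z ∉ ball x ρ) :
    ∃ j : ℕ, ρ * 2 ^ j ≤ dist x z ∧ dist x z < 2 * (ρ * 2 ^ j) := by
  have hρd : 1 ≤ dist x z / ρ := by
    rw [one_le_div hρ, dist_comm]; simpa using hz
  obtain ⟨j, hj₁, hj₂⟩ := exists_nat_pow_near hρd one_lt_two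
  refine ⟨j, ?_, ?_⟩
  · rw [le_div_iff₀ hρ] at hj₁; linarith
  · rw [div_lt_iff₀ hρ, pow_succ] at hj₂; linarith

end Annuli

section UpperRegular

variable {X : Type*} [MetricSpace X] [MeasurableSpace X] {μ : Measure X} {C m γ : ℝ}

lemma setLIntegral_annulus_dist_rpow_neg_le
    (hμ : ∀ z ρ, 0 < ρ → μ (ball z ρ) ≤ ENNReal.ofReal (C * ρ ^ m)) (hγ : 0 ≤ γ) {r : ℝ}
    (hr : 0 < r) (x : X) :
    ∫⁻ z in ball x (2 * r) \ ball x r, ENNReal.ofReal (dist x z ^ (-γ)) ∂μ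
      ≤ ENNReal.ofReal (2 ^ m * C * r ^ (m - γ)) := by
  have hbound : ∀ z ∈ ball x (2 * r) \ ball x r,
      ENNReal.ofReal (dist x z ^ (-γ)) ≤ ENNReal.ofReal (r ^ (-γ)) := fun z hz => by
    have hrz : r ≤ dist x z := by simpa [dist_comm] using hz.2
    exact ENNReal.ofReal_le_ofReal (Real.rpow_le_rpow_of_nonpos hr hrz (by linarith))
  calc ∫⁻ z in ball x (2 * r) \ ball x r, ENNReal.ofReal (dist x z ^ (-γ)) ∂μ
      ≤ ∫⁻ _ in ball x (2 * r) \ ball x r, ENNReal.ofReal (r ^ (-γ)) ∂μ :=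
        setLIntegral_mono measurable_const hbound
    _ ≤ ENNReal.ofReal (r ^ (-γ)) * μ (ball x (2 * r)) := by
        rw [setLIntegral_const]; gcongr; exact Set.sdiff_subset
    _ ≤ ENNReal.ofReal (r ^ (-γ)) * ENNReal.ofReal (C * (2 * r) ^ m) := by
        gcongr; exact hμ x _ (by positivity)
    _ = ENNReal.ofReal (2 ^ m * C * r ^ (m - γ)) := by
        rw [← ENNReal.ofReal_mul (by positivity), Real.mul_rpow (by norm_num) hr.le,
          sub_eq_add_neg, Real.rpow_add hr]
        ring_nf

variable [BorelSpace X]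

lemma setLIntegral_dist_rpow_neg_le_of_forall_mem_annulus (hC : 0 ≤ C)
    (hμ : ∀ z ρ, 0 < ρ → μ (ball z ρ) ≤ ENNReal.ofReal (C * ρ ^ m)) (hγ : 0 < γ) {a q : ℝ}
    (ha : 0 < a) (hq : 0 < q) (hqγ : q ^ (m - γ) < 1) {x : X} {E : Set X}
    (hE : ∀ z ∈ E, z ≠ x → ∃ j : ℕ, a * q ^ j ≤ dist x z ∧ dist x z < 2 * (a * q ^ j)) :
    ∫⁻ z in E, ENNReal.ofReal (dist x z ^ (-γ)) ∂μ
      ≤ ENNReal.ofReal (2 ^ m * C * (1 - q ^ (m - γ))⁻¹ * a ^ (m - γ)) := by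
  have hcover : E ⊆ {x} ∪ ⋃ j : ℕ, ball x (2 * (a * q ^ j)) \ ball x (a * q ^ j) := by
    intro z hz
    rcases eq_or_ne z x with rfl | hzx
    · exact Or.inl rfl
    obtain ⟨j, hj₁, hj₂⟩ := hE z hz hzx
    refine Or.inr (Set.mem_iUnion.2 ⟨j, ?_, ?_⟩) <;> simp [dist_comm, hj₂, hj₁]
  calc ∫⁻ z in E, ENNReal.ofReal (dist x z ^ (-γ)) ∂μ
      ≤ ∫⁻ z in {x}, ENNReal.ofReal (dist x z ^ (-γ)) ∂μ
        + ∑' j : ℕ, ∫⁻ z in ball x (2 * (a * q ^ j)) \ ball x (a * q ^ j),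
            ENNReal.ofReal (dist x z ^ (-γ)) ∂μ :=
        (lintegral_mono_set hcover).trans <|
          (lintegral_union_le _ _ _).trans (add_le_add le_rfl (lintegral_iUnion_le _ _))
    _ ≤ 0 + ∑' j : ℕ, ENNReal.ofReal (2 ^ m * C * (a * q ^ j) ^ (m - γ)) := by
        gcongr with j
        · simp [Real.zero_rpow (neg_ne_zero.2 hγ.ne')]
        · exact setLIntegral_annulus_dist_rpow_neg_le hμ hγ.le (by positivity) x
    _ = _ := by
        rw [zero_add, tsum_ofReal_mul_mul_pow_rpow (by positivity) ha hq hqγ]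

lemma exists_setLIntegral_ball_dist_rpow_neg_le (hC : 0 ≤ C)
    (hμ : ∀ z ρ, 0 < ρ → μ (ball z ρ) ≤ ENNReal.ofReal (C * ρ ^ m)) (hγ : 0 < γ) (hγm : γ < m) :
    ∃ K, 0 ≤ K ∧ ∀ (x : X) (ρ : ℝ), 0 < ρ →
      ∫⁻ z in ball x ρ, ENNReal.ofReal (dist x z ^ (-γ)) ∂μ
        ≤ ENNReal.ofReal (K * ρ ^ (m - γ)) := by
  have hq : (2⁻¹ : ℝ) ^ (m - γ) < 1 := Real.rpow_lt_one (by norm_num) (by norm_num) (by linarith)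
  refine ⟨2 ^ m * C * (1 - 2⁻¹ ^ (m - γ))⁻¹ * 2⁻¹ ^ (m - γ),
    by have := sub_pos.2 hq; positivity, fun x ρ hρ => ?_⟩
  convert setLIntegral_dist_rpow_neg_le_of_forall_mem_annulus hC hμ hγ (half_pos hρ)
    (by norm_num) hq (fun z hz hzx => exists_pow_le_dist_lt_of_mem_ball hz hzx) using 2
  rw [div_eq_mul_inv, Real.mul_rpow hρ.le (by norm_num)]
  ring

lemma exists_setLIntegral_compl_ball_dist_rpow_neg_le (hC : 0 ≤ C)
    (hμ : ∀ z ρ, 0 < ρ → μ (ball z ρ) ≤ ENNReal.ofReal (C * ρ ^ m)) (hγ : 0 < γ) (hγm : m < γ) :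
    ∃ K, 0 ≤ K ∧ ∀ (x : X) (ρ : ℝ), 0 < ρ →
      ∫⁻ z in (ball x ρ)ᶜ, ENNReal.ofReal (dist x z ^ (-γ)) ∂μ
        ≤ ENNReal.ofReal (K * ρ ^ (m - γ)) := by
  have hq : (2 : ℝ) ^ (m - γ) < 1 := Real.rpow_lt_one_of_one_lt_of_neg one_lt_two (by linarith)
  refine ⟨2 ^ m * C * (1 - 2 ^ (m - γ))⁻¹, by have := sub_pos.2 hq; positivity,
    fun x ρ hρ => ?_⟩
  exact setLIntegral_dist_rpow_neg_le_of_forall_mem_annulus hC hμ hγ hρ two_pos hq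
    (fun z hz _ => exists_pow_le_dist_lt_of_notMem_ball hρ hz)

lemma setLIntegral_ball_half_dist_rpow_neg_mul_le {x y : X} (hxy : x ≠ y) (α : ℝ) {β : ℝ}
    (hβ : 0 ≤ β) :
    ∫⁻ z in ball x (dist x y / 2), ENNReal.ofReal (dist x z ^ (-α) * dist z y ^ (-β)) ∂μ
      ≤ ENNReal.ofReal ((dist x y / 2) ^ (-β))
        * ∫⁻ z in ball x (dist x y / 2), ENNReal.ofReal (dist x z ^ (-α)) ∂μ := by
  have hr : 0 < dist x y / 2 := half_pos (dist_pos.2 hxy)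
  rw [← lintegral_const_mul' _ _ ENNReal.ofReal_ne_top]
  refine setLIntegral_mono' measurableSet_ball fun z hz => ?_
  have hzy : dist x y / 2 ≤ dist z y := by
    have := dist_triangle x z y
    rw [mem_ball, dist_comm] at hz
    linarith
  rw [← ENNReal.ofReal_mul (by positivity), mul_comm _ (dist x z ^ (-α))]
  exact ENNReal.ofReal_le_ofReal (mul_le_mul_of_nonneg_left
    (Real.rpow_le_rpow_of_nonpos hr hzy (by linarith)) (by positivity))

lemma setLIntegral_compl_balls_dist_rpow_neg_mul_le {x y : X} (hxy : x ≠ y) (α : ℝ) {β : ℝ}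
    (hβ : 0 ≤ β) :
    ∫⁻ z in (ball x (dist x y / 2) ∪ ball y (dist x y / 2))ᶜ,
        ENNReal.ofReal (dist x z ^ (-α) * dist z y ^ (-β)) ∂μ
      ≤ ENNReal.ofReal (3 ^ β)
        * ∫⁻ z in (ball x (dist x y / 2))ᶜ, ENNReal.ofReal (dist x z ^ (-(α + β))) ∂μ := by
  rw [← lintegral_const_mul' _ _ ENNReal.ofReal_ne_top]
  refine (setLIntegral_mono' (measurableSet_ball.union measurableSet_ball).compl
    fun z hz => ?_).trans (lintegral_mono_set (Set.compl_subset_compl.2 Set.subset_union_left))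
  simp only [Set.mem_compl_iff, Set.mem_union, mem_ball, not_or, not_lt] at hz
  obtain ⟨hzx, hzy⟩ := hz
  have hxz : 0 < dist x z := by
    rw [dist_comm]; exact (half_pos (dist_pos.2 hxy)).trans_le hzx
  -- `dist x y ≤ 2 * dist z y`, so the triangle inequality gives `dist x z ≤ 3 * dist z y`
  have hzy' : dist x z / 3 ≤ dist z y := by
    linarith [dist_triangle x y z, dist_comm y z]
  have h3 : dist z y ^ (-β) ≤ 3 ^ β * dist x z ^ (-β) := by
    calc dist z y ^ (-β) ≤ (dist x z / 3) ^ (-β) :=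
          Real.rpow_le_rpow_of_nonpos (by positivity) hzy' (by linarith)
      _ = 3 ^ β * dist x z ^ (-β) := by
          rw [Real.div_rpow hxz.le (by norm_num), Real.rpow_neg (by norm_num : (0:ℝ) ≤ 3)]
          field_simp
  rw [← ENNReal.ofReal_mul (by positivity)]
  refine ENNReal.ofReal_le_ofReal ?_
  calc dist x z ^ (-α) * dist z y ^ (-β) ≤ dist x z ^ (-α) * (3 ^ β * dist x z ^ (-β)) := by
        gcongr
    _ = 3 ^ β * dist x z ^ (-(α + β)) := by
        rw [neg_add, Real.rpow_add hxz]; ring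

variable {α β : ℝ}

lemma exists_lintegral_dist_rpow_neg_mul_dist_rpow_neg_le (hC : 0 ≤ C)
    (hμ : ∀ z ρ, 0 < ρ → μ (ball z ρ) ≤ ENNReal.ofReal (C * ρ ^ m))
    (hα : 0 < α) (hαm : α < m) (hβ : 0 < β) (hβm : β < m) (hαβ : m < α + β) :
    ∃ K, 0 ≤ K ∧ ∀ x y : X, x ≠ y →
      ∫⁻ z, ENNReal.ofReal (dist x z ^ (-α) * dist z y ^ (-β)) ∂μ
        ≤ ENNReal.ofReal (K * (dist x y / 2) ^ (m - (α + β))) := by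
  obtain ⟨K₁, hK₁, hx⟩ := exists_setLIntegral_ball_dist_rpow_neg_le hC hμ hα hαm
  obtain ⟨K₂, hK₂, hy⟩ := exists_setLIntegral_ball_dist_rpow_neg_le hC hμ hβ hβm
  obtain ⟨K₃, hK₃, hfar⟩ :=
    exists_setLIntegral_compl_ball_dist_rpow_neg_le hC hμ (add_pos hα hβ) hαβ
  refine ⟨K₁ + K₂ + 3 ^ β * K₃, by positivity, fun x y hxy => ?_⟩
  set t := dist x y / 2
  have ht : 0 < t := half_pos (dist_pos.2 hxy)
  have hcombine : ∀ a b K : ℝ, ENNReal.ofReal (t ^ (-b)) * ENNReal.ofReal (K * t ^ (m - a))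
      = ENNReal.ofReal (K * t ^ (m - (a + b))) := fun a b K => by
    rw [← ENNReal.ofReal_mul (by positivity), show m - (a + b) = m - a + -b by ring,
      Real.rpow_add ht]
    ring_nf
  have hswap : ∀ z, dist y z ^ (-β) * dist z x ^ (-α) = dist x z ^ (-α) * dist z y ^ (-β) :=
    fun z => by rw [dist_comm y z, dist_comm z x, mul_comm]
  have hnear_y := setLIntegral_ball_half_dist_rpow_neg_mul_le (μ := μ) hxy.symm β hα.le
  simp only [hswap, dist_comm y x] at hnear_y
  calc ∫⁻ z, ENNReal.ofReal (dist x z ^ (-α) * dist z y ^ (-β)) ∂μ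
      = ∫⁻ z in ball x t ∪ ball y t, ENNReal.ofReal (dist x z ^ (-α) * dist z y ^ (-β)) ∂μ
        + ∫⁻ z in (ball x t ∪ ball y t)ᶜ,
            ENNReal.ofReal (dist x z ^ (-α) * dist z y ^ (-β)) ∂μ :=
        (lintegral_add_compl _ (measurableSet_ball.union measurableSet_ball)).symm
    _ ≤ ENNReal.ofReal (t ^ (-β)) * ENNReal.ofReal (K₁ * t ^ (m - α))
        + ENNReal.ofReal (t ^ (-α)) * ENNReal.ofReal (K₂ * t ^ (m - β))
        + ENNReal.ofReal (3 ^ β) * ENNReal.ofReal (K₃ * t ^ (m - (α + β))) := by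
        refine add_le_add ((lintegral_union_le _ _ _).trans (add_le_add ?_ ?_)) ?_
        · exact (setLIntegral_ball_half_dist_rpow_neg_mul_le hxy α hβ.le).trans
            (by gcongr; exact hx x t ht)
        · exact hnear_y.trans (by gcongr; exact hy y t ht)
        · exact (setLIntegral_compl_balls_dist_rpow_neg_mul_le hxy α hβ.le).trans
            (by gcongr; exact hfar x t ht)
    _ = ENNReal.ofReal ((K₁ + K₂ + 3 ^ β * K₃) * t ^ (m - (α + β))) := by
        rw [hcombine, hcombine, add_comm β α, ← ENNReal.ofReal_mul (by positivity),
          ← ENNReal.ofReal_add (by positivity) (by positivity),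
          ← ENNReal.ofReal_add (by positivity) (by positivity)]
        ring_nf

theorem integral_dist_rpow_neg_mul_dist_rpow_neg_le (hC : 0 ≤ C)
    (hμ : ∀ z ρ, 0 < ρ → μ (ball z ρ) ≤ ENNReal.ofReal (C * ρ ^ m))
    (hα : 0 < α) (hαm : α < m) (hβ : 0 < β) (hβm : β < m) (hαβ : m < α + β) :
    ∃ C₁ : ℝ, ∀ x y : X, x ≠ y →
      ∫ z, dist x z ^ (-α) * dist z y ^ (-β) ∂μ ≤ C₁ * dist x y ^ (m - (α + β)) := by
  obtain ⟨K, hK, hbound⟩ :=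
    exists_lintegral_dist_rpow_neg_mul_dist_rpow_neg_le hC hμ hα hαm hβ hβm hαβ
  refine ⟨K / 2 ^ (m - (α + β)), fun x y hxy => ?_⟩
  rw [integral_eq_lintegral_of_nonneg_ae (ae_of_all _ fun z => by positivity)
    (by fun_prop : Measurable fun z => dist x z ^ (-α) * dist z y ^ (-β)).aestronglyMeasurable]
  calc _ ≤ K * (dist x y / 2) ^ (m - (α + β)) :=
        ENNReal.toReal_le_of_le_ofReal (by positivity) (hbound x y hxy)
    _ = _ := by rw [Real.div_rpow dist_nonneg zero_le_two]; ring

end UpperRegular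

lemma measure_ball_le_of_isFiniteMeasure {X : Type*} [MetricSpace X] [MeasurableSpace X]
    {ν : Measure X} [IsFiniteMeasure ν] {c R m : ℝ} (hc : 0 ≤ c) (hR : 0 < R) (hm : 0 ≤ m)
    (hreg : ∀ z ρ, 0 < ρ → ρ ≤ R → ν (ball z ρ) ≤ ENNReal.ofReal (c * ρ ^ m))
    (z : X) {ρ : ℝ} (hρ : 0 < ρ) :
    ν (ball z ρ) ≤ ENNReal.ofReal ((c + ν.real Set.univ / R ^ m) * ρ ^ m) := by
  rcases le_or_gt ρ R with hρR | hRρ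
  · refine (hreg z ρ hρ hρR).trans (ENNReal.ofReal_le_ofReal ?_)
    gcongr
    exact le_add_of_nonneg_right (by positivity)
  · calc ν (ball z ρ) ≤ ν Set.univ := measure_mono (Set.subset_univ _)
      _ = ENNReal.ofReal (ν.real Set.univ / R ^ m * R ^ m) := by
          rw [div_mul_cancel₀ _ (by positivity), ofReal_measureReal]
      _ ≤ ENNReal.ofReal ((c + ν.real Set.univ / R ^ m) * ρ ^ m) := by
          gcongr
          exact le_add_of_nonneg_left hc

theorem boundary_convolution_inequality_general
    {X : Type*} [MetricSpace X] [MeasurableSpace X] [BorelSpace X]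
    (n : ℕ) (S : Set X) (A : Measure X)
    (c R : ℝ) (hc : 0 < c) (hR : 0 < R)
    (hreg : ∀ (z : X) (ρ : ℝ), 0 < ρ → ρ ≤ R →
      A (ball z ρ ∩ S) ≤ ENNReal.ofReal (c * ρ ^ ((n : ℝ) - 1)))
    (hfin : A S < ⊤) :
    ∀ α β : ℝ, 0 < α → α < (n : ℝ) - 1 → 0 < β → β < (n : ℝ) - 1 →
      (n : ℝ) - 1 < α + β →
      ∃ C₁ : ℝ, ∀ x y : X, x ≠ y →
        ∫ z in S, (dist x z) ^ (-α) * (dist z y) ^ (-β) ∂A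
          ≤ C₁ * (dist x y) ^ ((n : ℝ) - 1 - (α + β)) := by
  intro α β hα hαn hβ hβn hαβ
  have : IsFiniteMeasure (A.restrict S) := isFiniteMeasure_restrict.2 hfin.ne
  have hball := measure_ball_le_of_isFiniteMeasure (ν := A.restrict S) hc.le hR
    (by linarith : (0 : ℝ) ≤ (n : ℝ) - 1)
    fun z ρ hρ hρR => by rw [Measure.restrict_apply measurableSet_ball]; exact hreg z ρ hρ hρR
  exact integral_dist_rpow_neg_mul_dist_rpow_neg_le (by positivity) hball hα hαn hβ hβn hαβ

/-- The boundary convolution inequality (e4): if `A` is an `(n-1)`-dimensionally upper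
regular measure on `S ⊆ X` with finite mass and diameter at most `R`, then for
`α, β ∈ (0, n-1)` with `α + β > n - 1` one has
`∫_Σ d(x,z)^{-α} d(z,y)^{-β} dA(z) ≤ C₁ d(x,y)^{n-1-(α+β)}`. -/
theorem boundary_convolution_inequality
    {X : Type*} [MetricSpace X] [MeasurableSpace X] [BorelSpace X]
    (n : ℕ) (hn : 2 ≤ n) (S : Set X) (A : Measure X)
    (c R : ℝ) (hc : 0 < c) (hR : 0 < R)
    (hreg : ∀ (z : X) (ρ : ℝ), 0 < ρ → ρ ≤ R →
      A (ball z ρ ∩ S) ≤ ENNReal.ofReal (c * ρ ^ ((n : ℝ) - 1)))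
    (hfin : A S < ⊤) (hdiam : diam S ≤ R) :
    ∀ α β : ℝ, 0 < α → α < (n : ℝ) - 1 → 0 < β → β < (n : ℝ) - 1 →
      (n : ℝ) - 1 < α + β →
      ∃ C₁ : ℝ, ∀ x y : X, x ≠ y →
        ∫ z in S, (dist x z) ^ (-α) * (dist z y) ^ (-β) ∂A
          ≤ C₁ * (dist x y) ^ ((n : ℝ) - 1 - (α + β)) :=
  boundary_convolution_inequality_general n S A c R hc hR hreg hfin
end

section
/- If Ω is a bounded convex open subset of ℝⁿ with nonempty interior, then the volume function v(x,r) = Vol(B(x,r)∩Ω) satisfies the doubling property (DP): there exist constants C > 0 and r₁ > 0 such that v(x,s) ≤ C (s/r)ⁿ v(x,r) for all x ∈ Ω and 0 < r ≤ s ≤ r₁. -/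
open MeasureTheory Metric Module

/-!
Trivially `v(x, s) ≤ Vol(B(x, s)) = sⁿ Vol(B(0, 1))`. Conversely, by convexity the homothety of
ratio `c = r / (r₁ + diam Ω)` centred at `x ∈ Ω` maps `Ω` into `B(x, r) ∩ Ω`, so
`v(x, r) ≥ cⁿ Vol(Ω)`. Dividing the two bounds gives (DP) with
`C = Vol(B(0, 1)) (r₁ + diam Ω)ⁿ / Vol(Ω)`.
-/

section

variable {E : Type*} [NormedAddCommGroup E] [NormedSpace ℝ E] {Ω : Set E} {x : E}

theorem Convex.homothety_image_subset_ball_inter (hconv : Convex ℝ Ω)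
    (hbdd : Bornology.IsBounded Ω) (hx : x ∈ Ω) {c r : ℝ} (hc₀ : 0 ≤ c) (hc₁ : c ≤ 1)
    (hcr : c * diam Ω < r) : AffineMap.homothety x c '' Ω ⊆ ball x r ∩ Ω := by
  rintro _ ⟨y, hy, rfl⟩
  refine ⟨?_, ?_⟩
  · rw [mem_ball, dist_homothety_center, Real.norm_eq_abs, abs_of_nonneg hc₀]
    exact (mul_le_mul_of_nonneg_left (dist_le_diam_of_mem hbdd hx hy) hc₀).trans_lt hcr
  · rw [AffineMap.homothety_eq_lineMap]
    exact hconv.lineMap_mem hx hy ⟨hc₀, hc₁⟩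

variable [MeasurableSpace E] [BorelSpace E] [FiniteDimensional ℝ E]
  (μ : Measure E) [μ.IsAddHaarMeasure]

theorem Convex.pow_mul_measureReal_le_measureReal_ball_inter (hconv : Convex ℝ Ω)
    (hbdd : Bornology.IsBounded Ω) (hx : x ∈ Ω) {c r : ℝ} (hc₀ : 0 ≤ c) (hc₁ : c ≤ 1)
    (hcr : c * diam Ω < r) : c ^ finrank ℝ E * μ.real Ω ≤ μ.real (ball x r ∩ Ω) := by
  have hsub := measureReal_mono (μ := μ)
    (hconv.homothety_image_subset_ball_inter hbdd hx hc₀ hc₁ hcr)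
    (measure_ne_top_of_subset Set.inter_subset_left measure_ball_lt_top.ne)
  have hpow : 0 ≤ c ^ finrank ℝ E := pow_nonneg hc₀ _
  rwa [measureReal_def, Measure.addHaar_image_homothety, ENNReal.toReal_mul, abs_of_nonneg hpow,
    ENNReal.toReal_ofReal hpow] at hsub

theorem measureReal_ball_inter_le_pow_mul (Ω : Set E) (x : E) {s : ℝ} (hs : 0 ≤ s) :
    μ.real (ball x s ∩ Ω) ≤ s ^ finrank ℝ E * μ.real (ball 0 1) := by
  rw [← Measure.addHaar_real_closedBall μ x hs]
  exact measureReal_mono (Set.inter_subset_left.trans ball_subset_closedBall)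
    measure_closedBall_lt_top.ne

theorem Convex.exists_doubling_measureReal_ball_inter (hconv : Convex ℝ Ω) (hopen : IsOpen Ω)
    (hbdd : Bornology.IsBounded Ω) (hne : Ω.Nonempty) {r₁ : ℝ} (hr₁ : 0 < r₁) :
    ∃ C, 0 < C ∧ ∀ x ∈ Ω, ∀ r s : ℝ, 0 < r → r ≤ s → s ≤ r₁ →
      μ.real (ball x s ∩ Ω) ≤ C * (s / r) ^ finrank ℝ E * μ.real (ball x r ∩ Ω) := by
  set d := finrank ℝ E
  set D := r₁ + diam Ω
  have hD : 0 < D := add_pos_of_pos_of_nonneg hr₁ diam_nonneg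
  have hΩ : 0 < μ.real Ω :=
    ENNReal.toReal_pos (hopen.measure_pos μ hne).ne' hbdd.measure_lt_top.ne
  have hB : 0 < μ.real (ball (0 : E) 1) :=
    ENNReal.toReal_pos (measure_ball_pos μ 0 one_pos).ne' measure_ball_lt_top.ne
  refine ⟨μ.real (ball 0 1) * D ^ d / μ.real Ω, by positivity, fun x hx r s hr hrs hsr₁ => ?_⟩
  have hs : 0 < s := hr.trans_le hrs
  have hlower : (r / D) ^ d * μ.real Ω ≤ μ.real (ball x r ∩ Ω) := by
    refine hconv.pow_mul_measureReal_le_measureReal_ball_inter μ hbdd hx (by positivity)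
      ((div_le_one hD).2 (by linarith [diam_nonneg (s := Ω)])) ?_
    rw [div_mul_eq_mul_div, div_lt_iff₀ hD]
    nlinarith
  calc μ.real (ball x s ∩ Ω)
      ≤ s ^ d * μ.real (ball 0 1) := measureReal_ball_inter_le_pow_mul μ Ω x hs.le
    _ = μ.real (ball 0 1) * D ^ d / μ.real Ω * (s / r) ^ d * ((r / D) ^ d * μ.real Ω) := by
      rw [div_pow, div_pow]
      field_simp
    _ ≤ _ := by gcongr

end

/-- A bounded convex open nonempty subset of ℝⁿ satisfies the doubling property (DP):
`v(x,s) ≤ C (s/r)ⁿ v(x,r)` for `x ∈ Ω` and `0 < r ≤ s ≤ r₁`,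
where `v(x,r) = Vol(B(x,r) ∩ Ω)`. -/
theorem convex_doubling_property (n : ℕ) (Ω : Set (EuclideanSpace ℝ (Fin n)))
    (hconv : Convex ℝ Ω) (hopen : IsOpen Ω) (hbdd : Bornology.IsBounded Ω)
    (hne : Ω.Nonempty) :
    ∃ C r₁ : ℝ, 0 < C ∧ 0 < r₁ ∧ ∀ x ∈ Ω, ∀ r s : ℝ, 0 < r → r ≤ s → s ≤ r₁ →
      (volume (ball x s ∩ Ω)).toReal
        ≤ C * (s / r) ^ (n : ℝ) * (volume (ball x r ∩ Ω)).toReal := by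
  obtain ⟨C, hC, hdoubling⟩ :=
    hconv.exists_doubling_measureReal_ball_inter volume hopen hbdd hne one_pos
  refine ⟨C, 1, hC, one_pos, fun x hx r s hr hrs hs => ?_⟩
  simpa only [Real.rpow_natCast, finrank_euclideanSpace_fin, measureReal_def]
    using hdoubling x hx r s hr hrs hs
end
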